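/- arXiv:2410.12730 — 3 statements merged into one kernel-verified Lean document; each statement's English description precedes it below -/
import Mathlib

section
/- For jointly distributed discrete random variables with joint density factorizing as p(z,x,t,t',y,y') = p(x) p(z|x) p(t|x) p(t'|x) p(y|z,t) p(y'|z,t'), the log conditional likelihood log p(y'|y,x,t,t') is bounded below by E_{z ~ p(·|y,t,x)}[log p(y|z,t)] - log p(y|x,t) + log p(y'|x,t') - D_KL(p(·|y,t,x) || p(·|y',t',x)), where D_KL is the Kullback-Leibler divergence between the latent posteriors. -/
/-!
Write `q` for the posterior `p(z | y, t, x)` and `q'` for `p(z | y', t', x)`. By Bayes' rule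
`log (q z / q' z) = log p(y|z,t) - log p(y'|z,t') - log p(y|x,t) + log p(y'|x,t')`, so the
right-hand side collapses to `E_q[log p(y'|z,t')]`. The left-hand side is `log E_q[p(y'|z,t')]`,
and the inequality is Jensen's inequality for the concave logarithm.
-/

open Finset Real

section

variable {ι : Type*}

theorem Finset.sum_mul_log_le_log_sum_mul (s : Finset ι) {w f : ι → ℝ}
    (hw : ∀ i ∈ s, 0 ≤ w i) (hw₁ : ∑ i ∈ s, w i = 1) (hf : ∀ i ∈ s, 0 < f i) :
    ∑ i ∈ s, w i * log (f i) ≤ log (∑ i ∈ s, w i * f i) :=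
  strictConcaveOn_log_Ioi.concaveOn.le_map_sum hw hw₁ hf

variable [Fintype ι]

noncomputable def posterior (p l : ι → ℝ) (z : ι) : ℝ :=
  p z * l z / ∑ z', p z' * l z'

noncomputable def klDivergence (q r : ι → ℝ) : ℝ :=
  ∑ z, q z * log (q z / r z)

theorem sum_posterior_mul (p l g : ι → ℝ) :
    ∑ z, posterior p l z * g z = (∑ z, p z * l z * g z) / ∑ z, p z * l z := by
  simp only [posterior, sum_div, div_mul_eq_mul_div]

theorem sum_posterior {p l : ι → ℝ} (h : ∑ z, p z * l z ≠ 0) : ∑ z, posterior p l z = 1 := by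
  simpa [div_self h] using sum_posterior_mul p l 1

theorem posterior_div_posterior {p l l' : ι → ℝ} {z : ι} (hp : p z ≠ 0) :
    posterior p l z / posterior p l' z =
      l z / l' z * ((∑ z', p z' * l' z') / ∑ z', p z' * l z') := by
  simp only [posterior]
  field_simp

section Positive

variable [Nonempty ι] {p l l' : ι → ℝ}

theorem sum_mul_pos (hp : ∀ z, 0 < p z) (hl : ∀ z, 0 < l z) : 0 < ∑ z, p z * l z :=
  sum_pos (fun z _ ↦ mul_pos (hp z) (hl z)) univ_nonempty

theorem log_posterior_div_posterior (hp : ∀ z, 0 < p z) (hl : ∀ z, 0 < l z)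
    (hl' : ∀ z, 0 < l' z) (z : ι) :
    log (posterior p l z / posterior p l' z) =
      log (l z) - log (l' z) + log (∑ z', p z' * l' z') - log (∑ z', p z' * l z') := by
  have hA := sum_mul_pos hp hl
  have hB := sum_mul_pos hp hl'
  rw [posterior_div_posterior (hp z).ne',
    log_mul (div_pos (hl z) (hl' z)).ne' (div_pos hB hA).ne',
    log_div (hl z).ne' (hl' z).ne', log_div hB.ne' hA.ne']
  ring

theorem elbo_eq_sum_posterior_mul_log (hp : ∀ z, 0 < p z) (hl : ∀ z, 0 < l z)
    (hl' : ∀ z, 0 < l' z) :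
    ∑ z, posterior p l z * log (l z) - log (∑ z, p z * l z) + log (∑ z, p z * l' z)
        - klDivergence (posterior p l) (posterior p l') =
      ∑ z, posterior p l z * log (l' z) := by
  have hq := sum_posterior (sum_mul_pos hp hl).ne'
  simp only [klDivergence, log_posterior_div_posterior hp hl hl', mul_add, mul_sub,
    sum_add_distrib, sum_sub_distrib, ← sum_mul, hq]
  ring

end Positive

theorem elbo_le_log_sum_posterior_mul {p l l' : ι → ℝ} (hp : ∀ z, 0 < p z)
    (hl : ∀ z, 0 < l z) (hl' : ∀ z, 0 < l' z) :
    ∑ z, posterior p l z * log (l z) - log (∑ z, p z * l z) + log (∑ z, p z * l' z)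
        - klDivergence (posterior p l) (posterior p l') ≤
      log ((∑ z, p z * l z * l' z) / ∑ z, p z * l z) := by
  rcases isEmpty_or_nonempty ι with _ | _
  · simp [klDivergence]
  have hA := sum_mul_pos hp hl
  rw [elbo_eq_sum_posterior_mul_log hp hl hl', ← sum_posterior_mul]
  exact univ.sum_mul_log_le_log_sum_mul (fun z _ ↦ (div_pos (mul_pos (hp z) (hl z)) hA).le)
    (sum_posterior hA.ne') (fun z _ ↦ hl' z)

end

theorem stmt0_general {Z X T Y : Type*} [Fintype Z]
    (pZ : X → Z → ℝ) (pY : Z → T → Y → ℝ)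
    (hZ : ∀ x z, 0 < pZ x z)
    (hY : ∀ z t y, 0 < pY z t y)
    (x : X) (t t' : T) (y y' : Y) :
    Real.log ((∑ z, pZ x z * pY z t y * pY z t' y') / (∑ z, pZ x z * pY z t y)) ≥
      (∑ z, (pZ x z * pY z t y / ∑ z', pZ x z' * pY z' t y) * Real.log (pY z t y))
        - Real.log (∑ z, pZ x z * pY z t y)
        + Real.log (∑ z, pZ x z * pY z t' y')
        - ∑ z, (pZ x z * pY z t y / ∑ z', pZ x z' * pY z' t y) *
            Real.log ((pZ x z * pY z t y / ∑ z', pZ x z' * pY z' t y) /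
              (pZ x z * pY z t' y' / ∑ z', pZ x z' * pY z' t' y')) :=
  elbo_le_log_sum_posterior_mul (p := pZ x) (l := fun z ↦ pY z t y) (l' := fun z ↦ pY z t' y')
    (hZ x) (fun z ↦ hY z t y) (fun z ↦ hY z t' y')

/-- ELBO for the counterfactual conditional likelihood under the twin-network
factorization p(z,x,t,t',y,y') = p(x) p(z|x) p(t|x) p(t'|x) p(y|z,t) p(y'|z,t'). -/
theorem stmt0 {Z X T Y : Type*} [Fintype Z] [Fintype X] [Fintype T] [Fintype Y]
    (pX : X → ℝ) (pZ : X → Z → ℝ) (pT : X → T → ℝ) (pY : Z → T → Y → ℝ)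
    (hX : ∀ x, 0 < pX x) (hZ : ∀ x z, 0 < pZ x z) (hT : ∀ x t, 0 < pT x t)
    (hY : ∀ z t y, 0 < pY z t y)
    (hXsum : ∑ x, pX x = 1) (hZsum : ∀ x, ∑ z, pZ x z = 1)
    (hTsum : ∀ x, ∑ t, pT x t = 1) (hYsum : ∀ z t, ∑ y, pY z t y = 1)
    (x : X) (t t' : T) (y y' : Y) :
    Real.log ((∑ z, pZ x z * pY z t y * pY z t' y') / (∑ z, pZ x z * pY z t y)) ≥
      (∑ z, (pZ x z * pY z t y / ∑ z', pZ x z' * pY z' t y) * Real.log (pY z t y))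
        - Real.log (∑ z, pZ x z * pY z t y)
        + Real.log (∑ z, pZ x z * pY z t' y')
        - ∑ z, (pZ x z * pY z t y / ∑ z', pZ x z' * pY z' t y) *
            Real.log ((pZ x z * pY z t y / ∑ z', pZ x z' * pY z' t y) /
              (pZ x z * pY z t' y' / ∑ z', pZ x z' * pY z' t' y')) :=
  stmt0_general pZ pY hZ hY x t t' y y'
end

section
/- Under the twin-network factorization, the log marginal likelihood log p(y|x,t) admits the variational lower bound: log p(y|x,t) ≥ E_{z ~ p(·|y,t,x)}[log p(y|z,t)] - E_{z ~ p(·|y,t,x)} D_KL(p(Y'|z,t') || p(Y'|x,t')) - D_KL(p(z|y,t,x) p(y'|z,t') || p(z|y',t',x) p(y'|z,t')), where the last KL divergence is between joint distributions over (z,y'). -/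
open scoped BigOperators

/-- Implicit-counterfactual-supervision ELBO for the observed likelihood
log p(y|x,t) under the twin-network factorization. -/
theorem stmt2 {Z X T Y : Type*} [Fintype Z] [Fintype X] [Fintype T] [Fintype Y]
    (pX : X → ℝ) (pZ : X → Z → ℝ) (pT : X → T → ℝ) (pY : Z → T → Y → ℝ)
    (hX : ∀ x, 0 < pX x) (hZ : ∀ x z, 0 < pZ x z) (hT : ∀ x t, 0 < pT x t)
    (hY : ∀ z t y, 0 < pY z t y)
    (hXsum : ∑ x, pX x = 1) (hZsum : ∀ x, ∑ z, pZ x z = 1)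
    (hTsum : ∀ x, ∑ t, pT x t = 1) (hYsum : ∀ z t, ∑ y, pY z t y = 1)
    (x : X) (t t' : T) (y : Y) :
    Real.log (∑ z, pZ x z * pY z t y) ≥
      (∑ z, (pZ x z * pY z t y / ∑ z', pZ x z' * pY z' t y) * Real.log (pY z t y))
        - (∑ z, (pZ x z * pY z t y / ∑ z', pZ x z' * pY z' t y) *
            ∑ y'', pY z t' y'' * Real.log (pY z t' y'' / ∑ z', pZ x z' * pY z' t' y''))
        - (∑ z, ∑ y'', ((pZ x z * pY z t y / ∑ z', pZ x z' * pY z' t y) * pY z t' y'') *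
            Real.log (((pZ x z * pY z t y / ∑ z', pZ x z' * pY z' t y) * pY z t' y'') /
              ((pZ x z * pY z t' y'' / ∑ z', pZ x z' * pY z' t' y'') * pY z t' y''))) := by
  have hZne : (Finset.univ : Finset Z).Nonempty := by
    rcases (Finset.univ : Finset Z).eq_empty_or_nonempty with h | h
    · exfalso; have h1 := hZsum x
      rw [h, Finset.sum_empty] at h1; norm_num at h1
    · exact h
  set S := ∑ z', pZ x z' * pY z' t y with hSdef
  have hS : 0 < S := Finset.sum_pos (fun z _ => mul_pos (hZ x z) (hY z t y)) hZne
  have hM : ∀ y'', 0 < ∑ z', pZ x z' * pY z' t' y'' :=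
    fun y'' => Finset.sum_pos (fun z _ => mul_pos (hZ x z) (hY z t' y'')) hZne
  have hw : ∀ z, 0 < pZ x z * pY z t y / S :=
    fun z => div_pos (mul_pos (hZ x z) (hY z t y)) hS
  apply ge_of_eq
  rw [← Finset.sum_sub_distrib, ← Finset.sum_sub_distrib]
  have step : ∀ z ∈ (Finset.univ : Finset Z),
      ((pZ x z * pY z t y / S) * Real.log (pY z t y)
        - (pZ x z * pY z t y / S) *
            ∑ y'', pY z t' y'' * Real.log (pY z t' y'' / ∑ z', pZ x z' * pY z' t' y'')
        - ∑ y'', ((pZ x z * pY z t y / S) * pY z t' y'') *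
            Real.log (((pZ x z * pY z t y / S) * pY z t' y'') /
              ((pZ x z * pY z t' y'' / ∑ z', pZ x z' * pY z' t' y'') * pY z t' y'')))
      = (pZ x z * pY z t y / S) * Real.log S := by
    intro z _
    set w := pZ x z * pY z t y / S with hwdef
    have hwpos : 0 < w := hw z
    have hlogw : Real.log w = Real.log (pZ x z) + Real.log (pY z t y) - Real.log S := by
      rw [hwdef, Real.log_div (mul_pos (hZ x z) (hY z t y)).ne' hS.ne',
        Real.log_mul (hZ x z).ne' (hY z t y).ne']
    have h23 : w * (∑ y'', pY z t' y'' * Real.log (pY z t' y'' / ∑ z', pZ x z' * pY z' t' y''))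
        + (∑ y'', (w * pY z t' y'') *
            Real.log ((w * pY z t' y'') /
              ((pZ x z * pY z t' y'' / ∑ z', pZ x z' * pY z' t' y'') * pY z t' y'')))
        = w * Real.log w - w * Real.log (pZ x z) := by
      rw [Finset.mul_sum, ← Finset.sum_add_distrib]
      have hper : ∀ y'' ∈ (Finset.univ : Finset Y),
          (w * (pY z t' y'' * Real.log (pY z t' y'' / ∑ z', pZ x z' * pY z' t' y''))
            + (w * pY z t' y'') *
              Real.log ((w * pY z t' y'') /
                ((pZ x z * pY z t' y'' / ∑ z', pZ x z' * pY z' t' y'') * pY z t' y'')))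
          = (Real.log w - Real.log (pZ x z)) * (w * pY z t' y'') := by
        intro y'' _
        have ha : 0 < pY z t' y'' := hY z t' y''
        have hm : 0 < ∑ z', pZ x z' * pY z' t' y'' := hM y''
        have hv : 0 < pZ x z * pY z t' y'' / ∑ z', pZ x z' * pY z' t' y'' :=
          div_pos (mul_pos (hZ x z) ha) hm
        rw [Real.log_div ha.ne' hm.ne',
          Real.log_div (mul_pos hwpos ha).ne' (mul_pos hv ha).ne',
          Real.log_mul hwpos.ne' ha.ne', Real.log_mul hv.ne' ha.ne',
          Real.log_div (mul_pos (hZ x z) ha).ne' hm.ne',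
          Real.log_mul (hZ x z).ne' ha.ne']
        ring
      rw [Finset.sum_congr rfl hper, ← Finset.mul_sum, ← Finset.mul_sum, hYsum z t']
      ring
    have hmul : w * Real.log w = w * Real.log (pZ x z) + w * Real.log (pY z t y)
        - w * Real.log S := by rw [hlogw]; ring
    linarith [h23, hmul]
  rw [Finset.sum_congr rfl step, ← Finset.sum_mul, ← Finset.sum_div,
    ← hSdef, div_self hS.ne', one_mul]
end

section
/- Consistency implies degenerate noise: if Y = f(Z,T,ε) and Y'' = f(Z,T,ε') where ε and ε' are i.i.d. random variables independent of (Z,T), and if Y = Y'' almost surely, then for every (z,t) in the support of (Z,T), the random variable f(z,t,ε) is almost surely constant; hence there exists a deterministic function g with g(z,t) = f(z,t,ε) almost surely. -/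
open MeasureTheory

private lemma null_fibers {Ω α : Type*} [MeasurableSpace Ω] [Countable α]
    (μ : Measure Ω) (h : Ω → α) :
    μ {ω | μ (h ⁻¹' {h ω}) = 0} = 0 := by
  have hsub : {ω | μ (h ⁻¹' {h ω}) = 0} ⊆ ⋃ a ∈ {a | μ (h ⁻¹' {a}) = 0}, h ⁻¹' {a} := by
    intro ω hω
    exact Set.mem_biUnion hω rfl
  refine measure_mono_null hsub ?_
  exact (measure_biUnion_null_iff (Set.to_countable _)).mpr (fun a ha => ha)

/-- Consistency implies degenerate noise: if Y = f(Z,T,ε) and Y'' = f(Z,T,ε')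
with ε, ε' i.i.d. and independent of (Z,T) and Y = Y'' a.s., then on the support
of (Z,T) the map f(z,t,ε) is a.s. constant, and there is a deterministic g with
g(Z,T) = f(Z,T,ε) a.s. -/
theorem stmt5 {Ω 𝒵 𝒯 E 𝒴 : Type*} [MeasurableSpace Ω]
    [Fintype 𝒵] [MeasurableSpace 𝒵] [MeasurableSingletonClass 𝒵]
    [Fintype 𝒯] [MeasurableSpace 𝒯] [MeasurableSingletonClass 𝒯]
    [Fintype E] [MeasurableSpace E] [MeasurableSingletonClass E]
    [Fintype 𝒴]
    (μ : Measure Ω) [IsProbabilityMeasure μ]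
    (Zr : Ω → 𝒵) (Tr : Ω → 𝒯) (ε ε' : Ω → E)
    (hZ : Measurable Zr) (hT : Measurable Tr) (hε : Measurable ε) (hε' : Measurable ε')
    (f : 𝒵 → 𝒯 → E → 𝒴)
    (hiid_indep : ProbabilityTheory.IndepFun ε ε' μ)
    (hiid_ident : ProbabilityTheory.IdentDistrib ε ε' μ μ)
    (hindepZT : ProbabilityTheory.IndepFun (fun ω => (Zr ω, Tr ω)) (fun ω => (ε ω, ε' ω)) μ)
    (hcons : ∀ᵐ ω ∂μ, f (Zr ω) (Tr ω) (ε ω) = f (Zr ω) (Tr ω) (ε' ω)) :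
    (∀ z t, μ {ω | Zr ω = z ∧ Tr ω = t} ≠ 0 →
        ∃ c : 𝒴, ∀ᵐ ω ∂μ, f z t (ε ω) = c) ∧
    ∃ g : 𝒵 → 𝒯 → 𝒴, ∀ᵐ ω ∂μ, f (Zr ω) (Tr ω) (ε ω) = g (Zr ω) (Tr ω) := by
  classical
  have hN : μ {ω | f (Zr ω) (Tr ω) (ε ω) ≠ f (Zr ω) (Tr ω) (ε' ω)} = 0 := by
    simpa [ae_iff] using hcons
  -- key lemma
  have keyA : ∀ z t e e', μ {ω | Zr ω = z ∧ Tr ω = t} ≠ 0 → μ (ε ⁻¹' {e}) ≠ 0 →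
      μ (ε ⁻¹' {e'}) ≠ 0 → f z t e = f z t e' := by
    intro z t e e' hzt he he'
    set S : Set Ω := (fun ω => (Zr ω, Tr ω)) ⁻¹' {(z, t)} ∩
      (fun ω => (ε ω, ε' ω)) ⁻¹' {(e, e')} with hSdef
    have hS : μ S = μ {ω | Zr ω = z ∧ Tr ω = t} * (μ (ε ⁻¹' {e}) * μ (ε ⁻¹' {e'})) := by
      rw [hSdef, hindepZT.measure_inter_preimage_eq_mul _ _ (measurableSet_singleton _)
        (measurableSet_singleton _)]
      congr 1
      · congr 1; ext ω; simp [Prod.ext_iff]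
      · have h1 : (fun ω => (ε ω, ε' ω)) ⁻¹' {(e, e')} = ε ⁻¹' {e} ∩ ε' ⁻¹' {e'} := by
          ext ω; simp [Prod.ext_iff]
        rw [h1, hiid_indep.measure_inter_preimage_eq_mul _ _ (measurableSet_singleton _)
          (measurableSet_singleton _), ← hiid_ident.measure_mem_eq (measurableSet_singleton e')]
    have hSne : μ (S \ {ω | f (Zr ω) (Tr ω) (ε ω) ≠ f (Zr ω) (Tr ω) (ε' ω)}) ≠ 0 := by
      rw [measure_diff_null hN, hS]
      exact mul_ne_zero hzt (mul_ne_zero he he')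
    obtain ⟨ω, hωS, hωn⟩ := nonempty_of_measure_ne_zero hSne
    simp only [hSdef, Set.mem_inter_iff, Set.mem_preimage, Set.mem_singleton_iff,
      Prod.ext_iff] at hωS
    obtain ⟨⟨hz, ht⟩, he1, he2⟩ := hωS
    have := not_not.mp hωn
    rwa [hz, ht, he1, he2] at this
  -- there is an atom of ε
  have hE : ∃ e₀, μ (ε ⁻¹' {e₀}) ≠ 0 := by
    by_contra h
    push_neg at h
    have huniv : (Set.univ : Set Ω) = ⋃ e, ε ⁻¹' {e} := by ext ω; simp
    have : μ Set.univ = 0 := by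
      rw [huniv]; exact measure_iUnion_null h
    simp at this
  obtain ⟨e₀, he₀⟩ := hE
  have hfibε : μ {ω | μ (ε ⁻¹' {ε ω}) = 0} = 0 := null_fibers μ ε
  constructor
  · intro z t hzt
    refine ⟨f z t e₀, ?_⟩
    rw [ae_iff]
    refine measure_mono_null ?_ hfibε
    intro ω hω
    by_contra hc
    exact hω (keyA z t (ε ω) e₀ hzt hc he₀)
  · refine ⟨fun z t => f z t e₀, ?_⟩
    have hfibZT : μ {ω | μ ((fun ω' => (Zr ω', Tr ω')) ⁻¹' {(Zr ω, Tr ω)}) = 0} = 0 :=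
      null_fibers μ (fun ω => (Zr ω, Tr ω))
    rw [ae_iff]
    refine measure_mono_null ?_ (measure_union_null hfibZT hfibε)
    intro ω hω
    rw [Set.mem_union]
    by_contra hc
    push_neg at hc
    obtain ⟨h1, h2⟩ := hc
    have hcell : μ {ω' | Zr ω' = Zr ω ∧ Tr ω' = Tr ω} ≠ 0 := by
      have : (fun ω' => (Zr ω', Tr ω')) ⁻¹' {(Zr ω, Tr ω)} =
          {ω' | Zr ω' = Zr ω ∧ Tr ω' = Tr ω} := by
        ext ω'; simp [Prod.ext_iff]
      rw [← this]; exact h1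
    exact hω (keyA (Zr ω) (Tr ω) (ε ω) e₀ hcell h2 he₀)
end
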